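/- Let u : ℝ⁴ → ℝ be a smooth function of (x, y, z, t), and let q : ℝ⁴ → ℝ be a smooth function satisfying the covering equations q_t = u_z q_x and q_y = u_x q_x. Then q_x · (u_{yz} − u_{tx} + u_z u_{xx} − u_x u_{xz}) = 0; in particular, wherever q_x ≠ 0, the function u satisfies the reduced quasi-classical self-dual Yang-Mills equation u_{yz} = u_{tx} − u_z u_{xx} + u_x u_{xz}. -/

import Mathlib

/-- Directional (partial) derivative of a function of `(x, y, z, t) ∈ ℝ⁴`. -/
noncomputable def pd (v : ℝ × ℝ × ℝ × ℝ) (f : ℝ × ℝ × ℝ × ℝ → ℝ) : ℝ × ℝ × ℝ × ℝ → ℝ :=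
  fun p => fderiv ℝ f p v

/-- Unit direction of `x`. -/
def ex : ℝ × ℝ × ℝ × ℝ := (1, 0, 0, 0)
/-- Unit direction of `y`. -/
def ey : ℝ × ℝ × ℝ × ℝ := (0, 1, 0, 0)
/-- Unit direction of `z`. -/
def ez : ℝ × ℝ × ℝ × ℝ := (0, 0, 1, 0)
/-- Unit direction of `t`. -/
def et : ℝ × ℝ × ℝ × ℝ := (0, 0, 0, 1)

/-- The left-hand side of the rYME `u_{yz} - u_{tx} + u_z u_{xx} - u_x u_{xz} = 0`. -/
noncomputable def ryme (u : ℝ × ℝ × ℝ × ℝ → ℝ) : ℝ × ℝ × ℝ × ℝ → ℝ :=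
  fun p => pd ey (pd ez u) p - pd et (pd ex u) p
    + pd ez u p * pd ex (pd ex u) p - pd ex u p * pd ex (pd ez u) p

lemma ContDiff.pd {n : WithTop ℕ∞} {f : ℝ × ℝ × ℝ × ℝ → ℝ} (hf : ContDiff ℝ (n + 1) f)
    (v : ℝ × ℝ × ℝ × ℝ) : ContDiff ℝ n (pd v f) :=
  (hf.fderiv_right le_rfl).clm_apply contDiff_const

lemma pd_mul {f g : ℝ × ℝ × ℝ × ℝ → ℝ} {v p : ℝ × ℝ × ℝ × ℝ}
    (hf : DifferentiableAt ℝ f p) (hg : DifferentiableAt ℝ g p) :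
    pd v (fun p => f p * g p) p = pd v f p * g p + f p * pd v g p := by
  simp only [pd, fderiv_fun_mul hf hg, add_apply, smul_apply, smul_eq_mul]
  ring

lemma pd_comm {f : ℝ × ℝ × ℝ × ℝ → ℝ} {p : ℝ × ℝ × ℝ × ℝ} (hf : ContDiffAt ℝ 2 f p)
    (v w : ℝ × ℝ × ℝ × ℝ) : pd v (pd w f) p = pd w (pd v f) p := by
  have hf' : DifferentiableAt ℝ (fderiv ℝ f) p :=
    (hf.fderiv_right (m := 1) le_rfl).differentiableAt one_ne_zero
  have pd_pd : ∀ v w, pd v (pd w f) p = fderiv ℝ (fderiv ℝ f) p v w := fun v w => by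
    change fderiv ℝ (fun y => fderiv ℝ f y w) p v = _
    simp [fderiv_clm_apply hf' (differentiableAt_const w)]
  rw [pd_pd, pd_pd]
  exact hf.isSymmSndFDerivAt (by simp) v w

section Covering

variable {q a b : ℝ × ℝ × ℝ × ℝ → ℝ} {v w w' : ℝ × ℝ × ℝ × ℝ}

lemma pd_pd_of_pd_eq_mul (hq : ContDiff ℝ 2 q) (ha : Differentiable ℝ a)
    (hw : ∀ p, pd w q p = a p * pd v q p) (w' p : ℝ × ℝ × ℝ × ℝ) :
    pd w' (pd w q) p = pd w' a p * pd v q p + a p * pd v (pd w' q) p := by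
  have hqv : Differentiable ℝ (pd v q) := (hq.pd v).differentiable one_ne_zero
  rw [funext hw, pd_mul (ha p) (hqv p), pd_comm hq.contDiffAt]

/-- The commutator of `X = ∂_w - a ∂_v` and `Y = ∂_{w'} - b ∂_v` is `(Y a - X b) ∂_v`;
since `X q = Y q = 0`, also `(Y a - X b) q_v = 0`. -/
theorem pd_mul_compatibility_eq_zero (hq : ContDiff ℝ 2 q) (ha : Differentiable ℝ a)
    (hb : Differentiable ℝ b) (hw : ∀ p, pd w q p = a p * pd v q p)
    (hw' : ∀ p, pd w' q p = b p * pd v q p) (p : ℝ × ℝ × ℝ × ℝ) :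
    pd v q p * (pd w' a p - pd w b p + a p * pd v b p - b p * pd v a p) = 0 := by
  have hqv : Differentiable ℝ (pd v q) := (hq.pd v).differentiable one_ne_zero
  have mixed := pd_comm hq.contDiffAt (p := p) w' w
  rw [pd_pd_of_pd_eq_mul hq ha hw w' p, pd_pd_of_pd_eq_mul hq hb hw' w p, funext hw, funext hw',
    pd_mul (hb p) (hqv p), pd_mul (ha p) (hqv p)] at mixed
  linear_combination mixed

end Covering

/-- Compatibility of the level-zero `q`-covering: if `q_t = u_z q_x` and
`q_y = u_x q_x`, then `q_x · (u_{yz} - u_{tx} + u_z u_{xx} - u_x u_{xz}) = 0`;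
wherever `q_x ≠ 0`, `u` satisfies the rYME. -/
theorem q_covering_compatibility (u q : ℝ × ℝ × ℝ × ℝ → ℝ)
    (hu : ContDiff ℝ (⊤ : ℕ∞) u) (hq : ContDiff ℝ (⊤ : ℕ∞) q)
    (h1 : ∀ p, pd et q p = pd ez u p * pd ex q p)
    (h2 : ∀ p, pd ey q p = pd ex u p * pd ex q p) :
    ∀ p, pd ex q p * ryme u p = 0 ∧ (pd ex q p ≠ 0 → ryme u p = 0) := by
  have hu' : ContDiff ℝ (1 + 1) u := hu.of_le (WithTop.coe_le_coe.mpr le_top)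
  intro p
  have hmain : pd ex q p * ryme u p = 0 :=
    pd_mul_compatibility_eq_zero (hq.of_le (WithTop.coe_le_coe.mpr le_top))
      ((hu'.pd ez).differentiable one_ne_zero) ((hu'.pd ex).differentiable one_ne_zero)
      h1 h2 p
  exact ⟨hmain, (mul_eq_zero.mp hmain).resolve_left⟩
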